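/- Suppose each category C_F is preadditive and each transition functor i_{F₁,F₂} is additive and faithful. Fix a face F₀ of Σ, a vertex v₀ ∈ F₀, and a faithful additive functor ω_{F₀} : C_{F₀} → Vect_K into the category of vector spaces over a field K. Then the functor ω : C(Σ) → Vect_K defined on objects by ω((ξ_v),(φ)) = ω_{F₀}(i_{\{v₀\},F₀}(ξ_{v₀})) and on morphisms by ω((ψ_v)) = ω_{F₀}(i_{\{v₀\},F₀}(ψ_{v₀})) is faithful. In particular, if a morphism ψ = (ψ_v) of C(Σ) satisfies ψ_{v₀} = 0 for one vertex v₀, then ψ_v = 0 for every vertex v. -/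

import Mathlib

set_option maxHeartbeats 1000000
set_option synthInstance.maxHeartbeats 400000

open CategoryTheory

universe w v u v' u'

variable {V : Type w} [DecidableEq V]

/-- A face of a simplicial complex `K` on the vertex set `V`. -/
@[reducible] def Face (K : Set (Finset V)) : Type w := {F : Finset V // F ∈ K}

lemma subPairL (v w : V) : ({v} : Finset V) ⊆ {v, w} := by
  intro x hx
  simp only [Finset.mem_singleton] at hx
  simp [hx]

lemma subPairR (v w : V) : ({w} : Finset V) ⊆ {v, w} := by
  intro x hx
  simp only [Finset.mem_singleton] at hx
  simp [hx]

lemma subTripU (u v w : V) : ({u} : Finset V) ⊆ {u, v, w} := by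
  intro x hx
  simp only [Finset.mem_singleton] at hx
  simp [hx]

lemma subTripUV (u v w : V) : ({u, v} : Finset V) ⊆ {u, v, w} := by
  intro x hx
  simp only [Finset.mem_insert, Finset.mem_singleton] at hx ⊢
  tauto

lemma subTripVW (u v w : V) : ({v, w} : Finset V) ⊆ {u, v, w} := by
  intro x hx
  simp only [Finset.mem_insert, Finset.mem_singleton] at hx ⊢
  tauto

lemma subTripUW (u v w : V) : ({u, w} : Finset V) ⊆ {u, v, w} := by
  intro x hx
  simp only [Finset.mem_insert, Finset.mem_singleton] at hx ⊢
  tauto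

/-- A (neutral Tannakian-style) category over a simplicial complex `K`: a category `C F`
for each face `F ∈ K` and a transition functor for each inclusion of faces, strictly
functorial. -/
structure CatOver (K : Set (Finset V)) where
  /-- the category attached to a face -/
  C : Face K → Type u
  /-- category instances -/
  inst : ∀ F, Category.{v} (C F)
  /-- transition functors -/
  tr : ∀ (F₁ F₂ : Face K), F₁.1 ⊆ F₂.1 → (C F₁ ⥤ C F₂)
  tr_id : ∀ F : Face K, tr F F (subset_refl _) = 𝟭 (C F)
  tr_comp : ∀ (F₁ F₂ F₃ : Face K) (h₁₂ : F₁.1 ⊆ F₂.1) (h₂₃ : F₂.1 ⊆ F₃.1),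
    tr F₁ F₃ (h₁₂.trans h₂₃) = tr F₁ F₂ h₁₂ ⋙ tr F₂ F₃ h₂₃

attribute [instance] CatOver.inst

variable {K : Set (Finset V)}

/-- An object of the descent category attached to a category over `K`: objects `ξ v` over
the vertices, compatible gluing isomorphisms `φ_{vw}` over the edges, satisfying
`φ_{wv} = φ_{vw}⁻¹` and the cocycle condition over the 2-faces. -/
structure DescentObj (D : CatOver.{w, v, u} K) where
  /-- the object over each vertex -/
  ξ : ∀ (v : V) (hv : ({v} : Finset V) ∈ K), D.C ⟨{v}, hv⟩
  /-- the gluing isomorphism over each (directed) edge -/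
  φ : ∀ (v w : V) (_ : v ≠ w) (hv : ({v} : Finset V) ∈ K) (hw : ({w} : Finset V) ∈ K)
    (he : ({v, w} : Finset V) ∈ K),
    (D.tr ⟨{v}, hv⟩ ⟨{v, w}, he⟩ (subPairL v w)).obj (ξ v hv) ≅
      (D.tr ⟨{w}, hw⟩ ⟨{v, w}, he⟩ (subPairR v w)).obj (ξ w hw)
  φ_symm : ∀ (v w : V) (hvw : v ≠ w) (hv : ({v} : Finset V) ∈ K)
    (hw : ({w} : Finset V) ∈ K) (he : ({v, w} : Finset V) ∈ K)
    (he' : ({w, v} : Finset V) ∈ K),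
    HEq (φ w v hvw.symm hw hv he') (φ v w hvw hv hw he).symm
  cocycle : ∀ (u v w : V) (huv : u ≠ v) (hvw : v ≠ w) (huw : u ≠ w)
    (hu : ({u} : Finset V) ∈ K) (hv : ({v} : Finset V) ∈ K) (hw : ({w} : Finset V) ∈ K)
    (heuv : ({u, v} : Finset V) ∈ K) (hevw : ({v, w} : Finset V) ∈ K)
    (heuw : ({u, w} : Finset V) ∈ K) (hF : ({u, v, w} : Finset V) ∈ K),
    eqToIso (Functor.congr_obj
        (D.tr_comp ⟨{u}, hu⟩ ⟨{u, w}, heuw⟩ ⟨{u, v, w}, hF⟩ (subPairL u w)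
          (subTripUW u v w)) (ξ u hu)) ≪≫
      (D.tr ⟨{u, w}, heuw⟩ ⟨{u, v, w}, hF⟩ (subTripUW u v w)).mapIso
        (φ u w huw hu hw heuw) ≪≫
      (eqToIso (Functor.congr_obj
        (D.tr_comp ⟨{w}, hw⟩ ⟨{u, w}, heuw⟩ ⟨{u, v, w}, hF⟩ (subPairR u w)
          (subTripUW u v w)) (ξ w hw))).symm =
    (eqToIso (Functor.congr_obj
        (D.tr_comp ⟨{u}, hu⟩ ⟨{u, v}, heuv⟩ ⟨{u, v, w}, hF⟩ (subPairL u v)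
          (subTripUV u v w)) (ξ u hu)) ≪≫
      (D.tr ⟨{u, v}, heuv⟩ ⟨{u, v, w}, hF⟩ (subTripUV u v w)).mapIso
        (φ u v huv hu hv heuv) ≪≫
      (eqToIso (Functor.congr_obj
        (D.tr_comp ⟨{v}, hv⟩ ⟨{u, v}, heuv⟩ ⟨{u, v, w}, hF⟩ (subPairR u v)
          (subTripUV u v w)) (ξ v hv))).symm) ≪≫
    (eqToIso (Functor.congr_obj
        (D.tr_comp ⟨{v}, hv⟩ ⟨{v, w}, hevw⟩ ⟨{u, v, w}, hF⟩ (subPairL v w)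
          (subTripVW u v w)) (ξ v hv)) ≪≫
      (D.tr ⟨{v, w}, hevw⟩ ⟨{u, v, w}, hF⟩ (subTripVW u v w)).mapIso
        (φ v w hvw hv hw hevw) ≪≫
      (eqToIso (Functor.congr_obj
        (D.tr_comp ⟨{w}, hw⟩ ⟨{v, w}, hevw⟩ ⟨{u, v, w}, hF⟩ (subPairR v w)
          (subTripVW u v w)) (ξ w hw))).symm)

/-- A morphism in the descent category: a compatible family of morphisms over the
vertices. -/
@[ext]
structure DescentHom {D : CatOver.{w, v, u} K} (X Y : DescentObj D) where
  /-- the component over each vertex -/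
  ψ : ∀ (v : V) (hv : ({v} : Finset V) ∈ K), X.ξ v hv ⟶ Y.ξ v hv
  comm : ∀ (v w : V) (hvw : v ≠ w) (hv : ({v} : Finset V) ∈ K)
    (hw : ({w} : Finset V) ∈ K) (he : ({v, w} : Finset V) ∈ K),
    (X.φ v w hvw hv hw he).hom ≫
        (D.tr ⟨{w}, hw⟩ ⟨{v, w}, he⟩ (subPairR v w)).map (ψ w hw) =
      (D.tr ⟨{v}, hv⟩ ⟨{v, w}, he⟩ (subPairL v w)).map (ψ v hv) ≫
        (Y.φ v w hvw hv hw he).hom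

/-- The descent category attached to a category over the simplicial complex `K`. -/
instance DescentObj.category (D : CatOver.{w, v, u} K) : Category (DescentObj D) where
  Hom X Y := DescentHom X Y
  id X :=
    { ψ := fun v hv => 𝟙 (X.ξ v hv)
      comm := by intros; simp }
  comp {X Y Z} f g :=
    { ψ := fun v hv => f.ψ v hv ≫ g.ψ v hv
      comm := by
        intro v w hvw hv hw he
        rw [Functor.map_comp, Functor.map_comp, ← Category.assoc, f.comm, Category.assoc,
          g.comm v w hvw hv hw he, ← Category.assoc] }
  id_comp f := by
    apply DescentHom.ext
    funext v hv
    exact Category.id_comp _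
  comp_id f := by
    apply DescentHom.ext
    funext v hv
    exact Category.comp_id _
  assoc f g h := by
    apply DescentHom.ext
    funext v hv
    exact Category.assoc _ _ _

/-!
Over an edge `{v, w}` the gluing condition `φ_{vw} ≫ i(ψ_w) = i(ψ_v) ≫ φ'_{vw}` determines
`i(ψ_w)` from `ψ_v` since `φ_{vw}` is an isomorphism, hence determines `ψ_w` since `i` is faithful.
Along paths in the connected 1-skeleton, a morphism of the descent category is therefore determined
by its component at `x₀`, which `ω ∘ i_{x₀,F₀}` sees faithfully. Vanishing is the comparison with
the zero family, a descent morphism because the transition functors preserve zero morphisms.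
-/
open CategoryTheory.Limits

namespace DescentHom

variable {D : CatOver.{w, v, u} K} {X Y : DescentObj D}

theorem ψ_eq_of_adj {f g : DescentHom X Y} {b c : V} (hb : ({b} : Finset V) ∈ K)
    (hc : ({c} : Finset V) ∈ K) (he : ({b, c} : Finset V) ∈ K)
    [(D.tr ⟨{c}, hc⟩ ⟨{b, c}, he⟩ (subPairR b c)).Faithful] (h : f.ψ b hb = g.ψ b hb) :
    f.ψ c hc = g.ψ c hc := by
  rcases eq_or_ne b c with rfl | hbc
  · exact h
  apply (D.tr ⟨{c}, hc⟩ ⟨{b, c}, he⟩ (subPairR b c)).map_injective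
  rw [← cancel_epi (X.φ b c hbc hb hc he).hom, f.comm, g.comm, h]

theorem ψ_eq_of_reflTransGen
    (hvert : ∀ a b : V, ({a, b} : Finset V) ∈ K → ({a} : Finset V) ∈ K)
    (htrfaithful : ∀ (F₁ F₂ : Face K) (h : F₁.1 ⊆ F₂.1), (D.tr F₁ F₂ h).Faithful)
    {f g : DescentHom X Y} {a b : V}
    (hab : Relation.ReflTransGen (fun a b : V => ({a, b} : Finset V) ∈ K) a b)
    (ha : ({a} : Finset V) ∈ K) (hb : ({b} : Finset V) ∈ K) (h : f.ψ a ha = g.ψ a ha) :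
    f.ψ b hb = g.ψ b hb := by
  induction hab with
  | refl => exact h
  | @tail b c _ hbc ih => exact ψ_eq_of_adj (hvert b c hbc) hb hbc (ih (hvert b c hbc))

theorem ext_of_ψ_eq (hvert : ∀ a b : V, ({a, b} : Finset V) ∈ K → ({a} : Finset V) ∈ K)
    (hconn : ∀ x y : V, ({x} : Finset V) ∈ K → ({y} : Finset V) ∈ K →
      Relation.ReflTransGen (fun a b : V => ({a, b} : Finset V) ∈ K) x y)
    (htrfaithful : ∀ (F₁ F₂ : Face K) (h : F₁.1 ⊆ F₂.1), (D.tr F₁ F₂ h).Faithful)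
    {f g : DescentHom X Y} {x₀ : V} (hx₀ : ({x₀} : Finset V) ∈ K)
    (h : f.ψ x₀ hx₀ = g.ψ x₀ hx₀) : f = g := by
  ext x hx
  exact ψ_eq_of_reflTransGen hvert htrfaithful (hconn x₀ x hx₀ hx) hx₀ hx h

variable [∀ F : Face K, HasZeroMorphisms (D.C F)]

def zero
    (htrzero : ∀ (F₁ F₂ : Face K) (h : F₁.1 ⊆ F₂.1), (D.tr F₁ F₂ h).PreservesZeroMorphisms) :
    DescentHom X Y where
  ψ _ _ := 0
  comm v w _ hv hw he := by
    rw [(htrzero _ ⟨{v, w}, he⟩ (subPairR v w)).map_zero,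
      (htrzero _ ⟨{v, w}, he⟩ (subPairL v w)).map_zero, comp_zero, zero_comp]

end DescentHom

/-- for a category over a connected (≤2)-dimensional simplicial complex with
preadditive fibers and additive faithful transition functors, the fiber functor on the
descent category obtained from a faithful additive functor `ω_{F₀} : C_{F₀} ⥤ Vect_𝕜` by
evaluating at a vertex `x₀ ∈ F₀` is faithful; in particular a morphism of the descent
category vanishing at one vertex vanishes at every vertex. -/
theorem statement12 {V : Type w} [DecidableEq V] {K : Set (Finset V)}
    (hne : ∃ x : V, ({x} : Finset V) ∈ K)
    (hfaces : ∀ F ∈ K, Finset.Nonempty F)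
    (hcard : ∀ F ∈ K, F.card ≤ 3)
    (hdown : ∀ F ∈ K, ∀ F' : Finset V, F' ⊆ F → F'.Nonempty → F' ∈ K)
    (hconn : ∀ x y : V, ({x} : Finset V) ∈ K → ({y} : Finset V) ∈ K →
      Relation.ReflTransGen (fun a b : V => ({a, b} : Finset V) ∈ K) x y)
    (D : CatOver.{w, v, u} K) [∀ F : Face K, Preadditive (D.C F)]
    (htradd : ∀ (F₁ F₂ : Face K) (h : F₁.1 ⊆ F₂.1), (D.tr F₁ F₂ h).Additive)
    (htrfaithful : ∀ (F₁ F₂ : Face K) (h : F₁.1 ⊆ F₂.1), (D.tr F₁ F₂ h).Faithful)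
    (𝕜 : Type v) [Field 𝕜] (F₀ : Face K) (x₀ : V) (hx₀ : ({x₀} : Finset V) ∈ K)
    (hsub : ({x₀} : Finset V) ⊆ F₀.1)
    (ω : D.C F₀ ⥤ ModuleCat.{v} 𝕜) (hωfaithful : ω.Faithful) (hωadd : ω.Additive) :
    (∀ (X Y : DescentObj D) (f g : X ⟶ Y),
        ω.map ((D.tr ⟨{x₀}, hx₀⟩ F₀ hsub).map (DescentHom.ψ f x₀ hx₀)) =
          ω.map ((D.tr ⟨{x₀}, hx₀⟩ F₀ hsub).map (DescentHom.ψ g x₀ hx₀)) → f = g) ∧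
      ∀ (X Y : DescentObj D) (f : X ⟶ Y), DescentHom.ψ f x₀ hx₀ = 0 →
        ∀ (x : V) (hx : ({x} : Finset V) ∈ K), DescentHom.ψ f x hx = 0 := by
  have hvert (a b : V) (he : ({a, b} : Finset V) ∈ K) : ({a} : Finset V) ∈ K :=
    hdown _ he _ (subPairL a b) (Finset.singleton_nonempty a)
  refine ⟨fun X Y f g h => ?_, fun X Y f hf x hx => ?_⟩
  · have := htrfaithful ⟨{x₀}, hx₀⟩ F₀ hsub
    exact DescentHom.ext_of_ψ_eq hvert hconn htrfaithful hx₀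
      ((D.tr ⟨{x₀}, hx₀⟩ F₀ hsub).map_injective (ω.map_injective h))
  · exact DescentHom.ψ_eq_of_reflTransGen hvert htrfaithful (hconn x₀ x hx₀ hx) hx₀ hx
      (g := DescentHom.zero fun F₁ F₂ h => have := htradd F₁ F₂ h; inferInstance) hf
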